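/- If D > D̲ := (1/2π)∫ φs·φn/(a·φs+φn) dω, then for every R > 0 there exists a nonnegative measurable φx on [−π,π] satisfying the MSE constraint (1/2π)∫ φs(φx+φn)/(aφs+φx+φn) dω ≤ D and achieving cognitive rate (1/2π)∫ log(1 + φx/(aφs+φn)) dω ≥ R. In other words, the cognitive rate is unbounded over the feasible set when the MSE constraint is strictly satisfiable. -/

import Mathlib

open MeasureTheory Real Set

/-- If `D > D̲ = (1/2π)∫ φsφn/(aφs+φn)`, then for every `R > 0` there is a
nonnegative measurable `φx` satisfying the MSE constraint and achieving cognitive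
rate at least `R`: the cognitive rate is unbounded over the feasible set. -/
theorem stmt5 (a D : ℝ) (ha : 0 < a) (hD : 0 < D) (φs φn : ℝ → ℝ)
    (hφs : ContinuousOn φs (Icc (-π) π)) (hφn : ContinuousOn φn (Icc (-π) π))
    (hφsp : ∀ ω ∈ Icc (-π) π, 0 < φs ω) (hφnp : ∀ ω ∈ Icc (-π) π, 0 < φn ω)
    (hDlow : (1 / (2 * π)) * ∫ ω in Icc (-π) π,
        φs ω * φn ω / (a * φs ω + φn ω) < D) :
    ∀ R : ℝ, 0 < R → ∃ φx : ℝ → ℝ, Measurable φx ∧ (∀ ω, 0 ≤ φx ω) ∧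
      (1 / (2 * π)) * ∫ ω in Icc (-π) π,
          φs ω * (φx ω + φn ω) / (a * φs ω + φx ω + φn ω) ≤ D ∧
      R ≤ (1 / (2 * π)) * ∫ ω in Icc (-π) π,
          Real.log (1 + φx ω / (a * φs ω + φn ω)) := by
  intro R hR
  have hπ : 0 < π := Real.pi_pos
  have hne : (Icc (-π) π).Nonempty := ⟨0, by constructor <;> linarith⟩
  -- maximum of φs
  obtain ⟨ωs, hωsmem, hωs⟩ := isCompact_Icc.exists_isMaxOn hne hφs
  set Cs := φs ωs with hCs_def
  have hCs : 0 < Cs := hφsp ωs hωsmem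
  -- continuity of the denominator a φs + φn and its bounds
  have hden_cont : ContinuousOn (fun ω => a * φs ω + φn ω) (Icc (-π) π) :=
    (continuousOn_const.mul hφs).add hφn
  have hden_pos : ∀ ω ∈ Icc (-π) π, 0 < a * φs ω + φn ω := fun ω hω => by
    have := hφsp ω hω; have := hφnp ω hω; positivity
  obtain ⟨ωd, hωdmem, hωd⟩ := isCompact_Icc.exists_isMaxOn hne hden_cont
  set Cd := a * φs ωd + φn ωd with hCd_def
  have hCd : 0 < Cd := hden_pos ωd hωdmem
  -- the lower-bound integrand f
  set f : ℝ → ℝ := fun ω => φs ω * φn ω / (a * φs ω + φn ω) with hf_def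
  have hf_cont : ContinuousOn f (Icc (-π) π) :=
    (hφs.mul hφn).div hden_cont (fun ω hω => ne_of_gt (hden_pos ω hω))
  have hf_int : IntegrableOn f (Icc (-π) π) :=
    hf_cont.integrableOn_compact isCompact_Icc
  have hf_nonneg : ∀ ω ∈ Icc (-π) π, 0 ≤ f ω := fun ω hω => by
    have := hφsp ω hω; have := hφnp ω hω; have := hden_pos ω hω; positivity
  have hf_le : ∀ ω ∈ Icc (-π) π, f ω ≤ Cs := fun ω hω => by
    have h1 := hφsp ω hω; have h2 := hφnp ω hω; have h3 := hden_pos ω hω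
    have h4 : φs ω ≤ Cs := hωs hω
    calc f ω ≤ φs ω := by
          rw [hf_def, div_le_iff₀ h3]; nlinarith [mul_pos (mul_pos ha h1) h1]
      _ ≤ Cs := h4
  -- the slack Δ
  set I := ∫ ω in Icc (-π) π, f ω with hI_def
  have hI_lt : I < 2 * π * D := by
    have h2π : (0:ℝ) < 2 * π := by positivity
    have : I = (2 * π) * ((1 / (2 * π)) * I) := by field_simp
    rw [this]
    exact mul_lt_mul_of_pos_left hDlow h2π
  set Δ := 2 * π * D - I with hΔ_def
  have hΔ : 0 < Δ := by simp only [hΔ_def]; linarith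
  -- choose ε and the interval S = Icc b π
  set ε := min π (Δ / Cs) with hε_def
  have hε : 0 < ε := lt_min hπ (div_pos hΔ hCs)
  have hεπ : ε ≤ π := min_le_left _ _
  have hεΔ : ε ≤ Δ / Cs := min_le_right _ _
  set b := π - ε with hb_def
  have hS_sub : Icc b π ⊆ Icc (-π) π := Icc_subset_Icc (by simp [hb_def]; linarith) le_rfl
  have hSmeas : MeasurableSet (Icc b π) := measurableSet_Icc
  -- choose M
  set M := Cd * Real.exp (2 * π * R / ε) with hM_def
  have hM : 0 < M := mul_pos hCd (Real.exp_pos _)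
  -- the input power spectrum
  set φx : ℝ → ℝ := (Icc b π).indicator (fun _ => M) with hφx_def
  have hφx_meas : Measurable φx := measurable_const.indicator hSmeas
  have hφx_nonneg : ∀ ω, 0 ≤ φx ω := fun ω =>
    Set.indicator_nonneg (fun _ _ => le_of_lt hM) ω
  have hφx_le : ∀ ω, φx ω ≤ M := fun ω =>
    Set.indicator_le_self' (fun _ _ => le_of_lt hM) ω |>.trans le_rfl
  -- common measurability facts
  have hφs_ae : AEMeasurable φs (volume.restrict (Icc (-π) π)) :=
    hφs.aemeasurable measurableSet_Icc
  have hφn_ae : AEMeasurable φn (volume.restrict (Icc (-π) π)) :=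
    hφn.aemeasurable measurableSet_Icc
  -- measure of the small interval
  have hvol : (volume (Icc b π)).toReal = ε := by
    have hπb : π - b = ε := by rw [hb_def]; ring
    rw [Real.volume_Icc, hπb, ENNReal.toReal_ofReal hε.le]
  refine ⟨φx, hφx_meas, hφx_nonneg, ?_, ?_⟩
  · -- the MSE constraint
    set g : ℝ → ℝ := fun ω => φs ω * (φx ω + φn ω) / (a * φs ω + φx ω + φn ω)
      with hg_def
    have hden2_pos : ∀ ω ∈ Icc (-π) π, 0 < a * φs ω + φx ω + φn ω := fun ω hω => by
      have h1 := hφsp ω hω; have h2 := hφnp ω hω; have h3 := hφx_nonneg ω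
      nlinarith [mul_pos ha h1]
    have hg_nonneg : ∀ ω ∈ Icc (-π) π, 0 ≤ g ω := fun ω hω => by
      have h1 := (hφsp ω hω).le; have h2 := (hφnp ω hω).le
      have h3 := (hden2_pos ω hω); have h4 := hφx_nonneg ω
      exact div_nonneg (by nlinarith) h3.le
    have hg_le : ∀ ω ∈ Icc (-π) π, g ω ≤ Cs := fun ω hω => by
      have h1 := hφsp ω hω; have h2 := hφnp ω hω; have h3 := hden2_pos ω hω
      have hx := hφx_nonneg ω
      have h4 : φs ω ≤ Cs := hωs hω
      calc g ω ≤ φs ω := by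
            rw [hg_def, div_le_iff₀ h3]; nlinarith [mul_pos (mul_pos ha h1) h1]
        _ ≤ Cs := h4
    have hg_ae : AEMeasurable g (volume.restrict (Icc (-π) π)) :=
      (hφs_ae.mul ((hφx_meas.aemeasurable).add hφn_ae)).div
        (((aemeasurable_const.mul hφs_ae).add hφx_meas.aemeasurable).add hφn_ae)
    have hg_int : IntegrableOn g (Icc (-π) π) := by
      apply Integrable.mono' (integrable_const Cs) hg_ae.aestronglyMeasurable
      filter_upwards [ae_restrict_mem measurableSet_Icc] with ω hω
      rw [Real.norm_eq_abs, abs_of_nonneg (hg_nonneg ω hω)]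
      exact hg_le ω hω
    set h : ℝ → ℝ := fun ω => f ω + (Icc b π).indicator (fun _ => Cs) ω with hh_def
    have hind_int : IntegrableOn ((Icc b π).indicator (fun _ => Cs)) (Icc (-π) π) :=
      (integrable_const Cs).indicator hSmeas
    have hh_int : IntegrableOn h (Icc (-π) π) := hf_int.add hind_int
    have hgh : ∀ ω ∈ Icc (-π) π, g ω ≤ h ω := fun ω hω => by
      by_cases hmem : ω ∈ Icc b π
      · have : (Icc b π).indicator (fun _ => Cs) ω = Cs := indicator_of_mem hmem _
        rw [hh_def]; dsimp only; rw [this]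
        have := hf_nonneg ω hω
        have := hg_le ω hω
        linarith
      · have h1 : φx ω = 0 := indicator_of_notMem hmem _
        have h2 : (Icc b π).indicator (fun _ => Cs) ω = 0 := indicator_of_notMem hmem _
        rw [hh_def]; dsimp only; rw [h2, hg_def]; dsimp only; rw [h1, hf_def]
        simp
    have hint_le : ∫ ω in Icc (-π) π, g ω ≤ ∫ ω in Icc (-π) π, h ω :=
      setIntegral_mono_on hg_int hh_int measurableSet_Icc hgh
    have hhval : ∫ ω in Icc (-π) π, h ω = I + Cs * ε := by
      rw [hh_def]
      rw [integral_add hf_int hind_int]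
      congr 1
      rw [setIntegral_indicator hSmeas, inter_eq_self_of_subset_right hS_sub,
        setIntegral_const, measureReal_def, hvol, smul_eq_mul, mul_comm]
    have hCsε : Cs * ε ≤ Δ := by
      have := (le_div_iff₀ hCs).mp hεΔ
      linarith
    have hfinal : ∫ ω in Icc (-π) π, g ω ≤ 2 * π * D := by
      rw [hhval] at hint_le
      have : I + Cs * ε ≤ 2 * π * D := by rw [hΔ_def] at hCsε; linarith
      linarith
    have h2π : (0:ℝ) < 2 * π := by positivity
    calc (1 / (2 * π)) * ∫ ω in Icc (-π) π, g ω
        ≤ (1 / (2 * π)) * (2 * π * D) := by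
          apply mul_le_mul_of_nonneg_left hfinal (by positivity)
      _ = D := by field_simp
  · -- the rate bound
    obtain ⟨ωδ, hωδmem, hωδ⟩ := isCompact_Icc.exists_isMinOn hne hden_cont
    set δ := a * φs ωδ + φn ωδ with hδ_def
    have hδ : 0 < δ := hden_pos ωδ hωδmem
    set c : ℝ := Real.log (1 + M / Cd) with hc_def
    set l : ℝ → ℝ := fun ω => Real.log (1 + φx ω / (a * φs ω + φn ω)) with hl_def
    have hc_ge : 2 * π * R / ε ≤ c := by
      have hMC : M / Cd = Real.exp (2 * π * R / ε) := by
        rw [hM_def]; field_simp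
      rw [hc_def, hMC]
      calc 2 * π * R / ε = Real.log (Real.exp (2 * π * R / ε)) := (Real.log_exp _).symm
        _ ≤ Real.log (1 + Real.exp (2 * π * R / ε)) := by
            apply Real.log_le_log (Real.exp_pos _)
            linarith [Real.exp_pos (2 * π * R / ε)]
    set ind2 : ℝ → ℝ := (Icc b π).indicator (fun _ => c) with hind2_def
    have hind2_int : IntegrableOn ind2 (Icc (-π) π) :=
      (integrable_const c).indicator hSmeas
    have hl_nonneg : ∀ ω ∈ Icc (-π) π, 0 ≤ l ω := fun ω hω => by
      apply Real.log_nonneg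
      have h1 := hden_pos ω hω
      have h2 := hφx_nonneg ω
      have : 0 ≤ φx ω / (a * φs ω + φn ω) := div_nonneg h2 h1.le
      linarith
    have hl_le : ∀ ω ∈ Icc (-π) π, l ω ≤ Real.log (1 + M / δ) := fun ω hω => by
      have h1 := hden_pos ω hω
      have h2 := hφx_nonneg ω
      have h3 : δ ≤ a * φs ω + φn ω := hωδ hω
      have h4 : φx ω / (a * φs ω + φn ω) ≤ M / δ :=
        div_le_div₀ hM.le (hφx_le ω) hδ h3
      apply Real.log_le_log (by positivity)
      linarith
    have hl_ae : AEMeasurable l (volume.restrict (Icc (-π) π)) := by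
      apply Real.measurable_log.comp_aemeasurable
      exact aemeasurable_const.add
        ((hφx_meas.aemeasurable).div ((aemeasurable_const.mul hφs_ae).add hφn_ae))
    have hl_int : IntegrableOn l (Icc (-π) π) := by
      apply Integrable.mono' (integrable_const (Real.log (1 + M / δ)))
        hl_ae.aestronglyMeasurable
      filter_upwards [ae_restrict_mem measurableSet_Icc] with ω hω
      rw [Real.norm_eq_abs, abs_of_nonneg (hl_nonneg ω hω)]
      exact hl_le ω hω
    have hptwise : ∀ ω ∈ Icc (-π) π, ind2 ω ≤ l ω := fun ω hω => by
      by_cases hmem : ω ∈ Icc b π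
      · have h1 : ind2 ω = c := indicator_of_mem hmem _
        have h2 : φx ω = M := indicator_of_mem hmem _
        rw [h1, hl_def]; dsimp only; rw [h2]
        have h3 := hden_pos ω hω
        have h4 : a * φs ω + φn ω ≤ Cd := hωd hω
        have h5 : M / Cd ≤ M / (a * φs ω + φn ω) :=
          div_le_div_of_nonneg_left hM.le h3 h4
        apply Real.log_le_log (by positivity)
        linarith
      · have h1 : ind2 ω = 0 := indicator_of_notMem hmem _
        have h2 : φx ω = 0 := indicator_of_notMem hmem _
        rw [h1, hl_def]; dsimp only; rw [h2]
        simp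
    have hint_ge : ∫ ω in Icc (-π) π, ind2 ω ≤ ∫ ω in Icc (-π) π, l ω :=
      setIntegral_mono_on hind2_int hl_int measurableSet_Icc hptwise
    have hind2val : ∫ ω in Icc (-π) π, ind2 ω = ε * c := by
      rw [hind2_def, setIntegral_indicator hSmeas,
        inter_eq_self_of_subset_right hS_sub, setIntegral_const, measureReal_def, hvol, smul_eq_mul]
    have hεc : 2 * π * R ≤ ε * c := by
      have h1 : ε * (2 * π * R / ε) ≤ ε * c := mul_le_mul_of_nonneg_left hc_ge hε.le
      have h2 : ε * (2 * π * R / ε) = 2 * π * R := by field_simp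
      linarith
    have hfinal : 2 * π * R ≤ ∫ ω in Icc (-π) π, l ω := by
      rw [hind2val] at hint_ge; linarith
    have h2π : (0:ℝ) < 2 * π := by positivity
    calc R = (1 / (2 * π)) * (2 * π * R) := by field_simp
      _ ≤ (1 / (2 * π)) * ∫ ω in Icc (-π) π, l ω := by
          apply mul_le_mul_of_nonneg_left hfinal (by positivity)
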